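/- arXiv:1706.02946 — 2 statements merged into one kernel-verified Lean document; each statement's English description precedes it below -/
import Mathlib

section
/- Let A = [[1,0,0,1,1,0,1],[0,1,0,1,0,1,1],[0,0,1,0,1,1,1]] be the model matrix of AS independence of three binary attributes on the 7-cell sample space excluding (0,0,0). The vector p̂ = (s, s, s, s², s², s², s³), where s = 2^{1/3} − 1, is a strictly positive probability vector (its coordinates sum to 1) satisfying log p̂ ∈ rowspace(A), and A p̂ = γ A q with q = (0,0,0,0,0,0,1)ᵀ and γ = 2 − 4^{1/3}. -/
/-!
Put c = 2^{1/3} and s = c - 1, so (1 + s)³ = 2, i.e. 3s + 3s² + s³ = 1: the coordinates of p̂ sum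
to one. The cell x ∈ {0,1}³ carries p̂ₓ = s^{|x|} = ∏ᵢ s^{xᵢ}, and |x| is the column sum of A at x,
so log p̂ = log s · (sum of the rows of A). Each row of A selects the cells with one attribute
equal to 1, the other two being free, so every row sum of A p̂ is s (1 + s)² = c³ - c² = 2 - 4^{1/3},
while every row sum of A q is 1.
-/

open Matrix BigOperators

theorem log_pow_mem_span_rows {m n : Type*} [Fintype m] (A : Matrix m n ℝ) (s : ℝ) (k : n → ℕ)
    (hk : ∀ j, (k j : ℝ) = ∑ i, A i j) :
    (fun j => Real.log (s ^ k j)) ∈ Submodule.span ℝ (Set.range fun i => A i) := by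
  have h : (fun j => Real.log (s ^ k j)) = ∑ i, Real.log s • A i := by
    funext j
    simp [Real.log_pow, hk, Finset.mul_sum, mul_comm]
  rw [h]
  exact Submodule.sum_mem _ fun i _ => Submodule.smul_mem _ _ (Submodule.subset_span ⟨i, rfl⟩)

theorem two_rpow_one_third_pow_three : ((2:ℝ) ^ ((1:ℝ)/3)) ^ 3 = 2 := by
  rw [← Real.rpow_natCast, ← Real.rpow_mul (by norm_num)]
  norm_num

theorem four_rpow_one_third : (4:ℝ) ^ ((1:ℝ)/3) = ((2:ℝ) ^ ((1:ℝ)/3)) ^ 2 := by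
  rw [← Real.rpow_natCast, ← Real.rpow_mul (by norm_num), show (4:ℝ) = 2 ^ (2:ℝ) by norm_num,
    ← Real.rpow_mul (by norm_num)]
  norm_num

theorem one_lt_two_rpow_one_third : 1 < (2:ℝ) ^ ((1:ℝ)/3) :=
  Real.one_lt_rpow (by norm_num) (by norm_num)

theorem stmt14 :
    let s : ℝ := (2:ℝ) ^ ((1:ℝ)/3) - 1
    let γ : ℝ := 2 - (4:ℝ) ^ ((1:ℝ)/3)
    let A : Matrix (Fin 3) (Fin 7) ℝ :=
      !![1,0,0,1,1,0,1;0,1,0,1,0,1,1;0,0,1,0,1,1,1]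
    let phat : Fin 7 → ℝ := ![s,s,s,s^2,s^2,s^2,s^3]
    let q : Fin 7 → ℝ := ![0,0,0,0,0,0,1]
    (∀ i, 0 < phat i) ∧ (∑ i, phat i = 1) ∧
    ((fun i => Real.log (phat i)) ∈ Submodule.span ℝ (Set.range fun j => A j)) ∧
    A.mulVec phat = γ • A.mulVec q := by
  intro s γ A phat q
  have hs_pos : 0 < s := sub_pos.mpr one_lt_two_rpow_one_third
  have hs_cube : (1 + s) ^ 3 = 2 := by rw [add_sub_cancel, two_rpow_one_third_pow_three]
  have hγ : γ = s * (1 + s) ^ 2 := by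
    simp only [γ, s, four_rpow_one_third]
    linear_combination -two_rpow_one_third_pow_three
  set k : Fin 7 → ℕ := ![1,1,1,2,2,2,3]
  have hphat : phat = fun j => s ^ k j := by
    funext j
    fin_cases j <;> simp [phat, k]
  have hk : ∀ j, (k j : ℝ) = ∑ i, A i j := by
    intro j
    fin_cases j <;> simp [A, k, Fin.sum_univ_succ] <;> norm_num
  refine ⟨fun j => hphat ▸ pow_pos hs_pos (k j), ?_, hphat ▸ log_pow_mem_span_rows A s k hk, ?_⟩
  · simp [phat, Fin.sum_univ_succ]
    linear_combination hs_cube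
  · rw [hγ]
    ext i
    fin_cases i <;> simp [A, phat, q, mulVec, dotProduct, Fin.sum_univ_succ] <;> ring
end

section
/- For the ELP matrices A = [[1,0,0,1,1,0],[0,1,0,1,0,1],[0,0,1,0,1,1]] and Ā = A augmented with the all-ones row: if p > 0 satisfies log p ∈ rowspace(Ā) with a nonzero overall effect (i.e., log p = θ₀·1 + Aᵀθ with θ₀ ≠ 0), then p does not satisfy all three multiplicative constraints p₄ = p₁p₂, p₅ = p₁p₃, p₆ = p₂p₃. -/
open Matrix BigOperators

/-! Column 4 of `A` is the sum of columns 1 and 2 (indices `3`, `0`, `1` in `Fin 6`), so in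
`log p₁ + log p₂ - log p₄` every `θⱼ` cancels while the overall effect `θ₀` survives once;
hence `p₄ = p₁ p₂` forces `θ₀ = 0`. -/

theorem log_mul_eq_add_log_of_col_eq_add {m n : Type*} [Fintype m] (A : Matrix m n ℝ)
    (p : n → ℝ) (θ₀ : ℝ) (θ : m → ℝ) (hlog : ∀ i, Real.log (p i) = θ₀ + ∑ j, A j i * θ j)
    {a b c : n} (hcol : ∀ j, A j c = A j a + A j b) (ha : p a ≠ 0) (hb : p b ≠ 0) :
    Real.log (p a * p b) = θ₀ + Real.log (p c) := by
  rw [Real.log_mul ha hb, hlog a, hlog b, hlog c]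
  simp only [hcol, add_mul, Finset.sum_add_distrib]
  ring

theorem overall_effect_eq_zero_of_mul_eq_of_col_eq_add {m n : Type*} [Fintype m]
    (A : Matrix m n ℝ) (p : n → ℝ) (θ₀ : ℝ) (θ : m → ℝ)
    (hlog : ∀ i, Real.log (p i) = θ₀ + ∑ j, A j i * θ j)
    {a b c : n} (hcol : ∀ j, A j c = A j a + A j b) (ha : p a ≠ 0) (hb : p b ≠ 0)
    (hmul : p c = p a * p b) : θ₀ = 0 := by
  have hlog_mul := log_mul_eq_add_log_of_col_eq_add A p θ₀ θ hlog hcol ha hb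
  rw [← hmul] at hlog_mul
  linarith

theorem stmt18 (p : Fin 6 → ℝ) (hp : ∀ i, 0 < p i) (θ₀ : ℝ) (θ : Fin 3 → ℝ)
    (hθ₀ : θ₀ ≠ 0)
    (hlog : ∀ i, Real.log (p i) = θ₀ + ∑ j,
      (!![1,0,0,1,1,0;0,1,0,1,0,1;0,0,1,0,1,1] : Matrix (Fin 3) (Fin 6) ℝ) j i * θ j) :
    ¬ (p 3 = p 0 * p 1 ∧ p 4 = p 0 * p 2 ∧ p 5 = p 1 * p 2) := by
  rintro ⟨hmul, -, -⟩
  set A : Matrix (Fin 3) (Fin 6) ℝ := !![1,0,0,1,1,0;0,1,0,1,0,1;0,0,1,0,1,1] with hA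
  have hcol : ∀ j, A j 3 = A j 0 + A j 1 := by
    intro j; fin_cases j <;> simp [hA]
  exact hθ₀ (overall_effect_eq_zero_of_mul_eq_of_col_eq_add A p θ₀ θ hlog hcol
    (hp 0).ne' (hp 1).ne' hmul)
end
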